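/- Let (L,E,R,∂₂,∂₁,{,}) be a 2-crossed module of commutative algebras. In L, for all e,f,g ∈ E: g▶'{f⊗e} = {fg⊗e}, where ▶' denotes the action e▶'l = {e⊗∂₂(l)} of E on L. -/

import Mathlib

/-- An action of a commutative `k`-algebra `R` on a commutative `k`-algebra `M`:
a `k`-bilinear map satisfying `r▶(mm') = (r▶m)m' = m(r▶m')` and `(rr')▶m = r▶(r'▶m)`. -/
structure AlgAction (k R M : Type*) [CommRing k] [CommRing R] [CommRing M]
    [Algebra k R] [Algebra k M] where
  act : R →ₗ[k] M →ₗ[k] M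
  a1 : ∀ (r : R) (m m' : M), act r (m * m') = act r m * m'
  a1' : ∀ (r : R) (m m' : M), act r (m * m') = m * act r m'
  a2 : ∀ (r r' : R) (m : M), act (r * r') m = act r (act r' m)

/-- A 2-crossed module of commutative `k`-algebras, with Peiffer lifting `lift e e' = {e ⊗ e'}`.
The action `e ▶' l` of `E` on `L` is `lift e (d2 l)` (axiom 2XM5 is definitional). -/
structure TwoCrossedModule (k L E R : Type*) [CommRing k] [CommRing L] [CommRing E] [CommRing R]
    [Algebra k L] [Algebra k E] [Algebra k R] where
  actE : AlgAction k R E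
  actL : AlgAction k R L
  d2 : L →ₗ[k] E
  d1 : E →ₗ[k] R
  d2_mul : ∀ l l' : L, d2 (l * l') = d2 l * d2 l'
  d1_mul : ∀ e e' : E, d1 (e * e') = d1 e * d1 e'
  comp : ∀ l : L, d1 (d2 l) = 0
  d1_act : ∀ (r : R) (e : E), d1 (actE.act r e) = r * d1 e
  d2_act : ∀ (r : R) (l : L), d2 (actL.act r l) = actE.act r (d2 l)
  lift : E →ₗ[k] E →ₗ[k] L
  axm1 : ∀ e e' : E, d2 (lift e e') = e * e' - actE.act (d1 e') e
  axm2 : ∀ l l' : L, lift (d2 l) (d2 l') = l * l'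
  axm3 : ∀ e e' e'' : E, lift e (e' * e'') = lift (e * e') e'' + actL.act (d1 e'') (lift e e')
  axm4 : ∀ (l : L) (e : E), lift (d2 l) e = lift e (d2 l) - actL.act (d1 e) l
  axm6a : ∀ (r : R) (e e' : E), actL.act r (lift e e') = lift (actE.act r e) e'
  axm6b : ∀ (r : R) (e e' : E), actL.act r (lift e e') = lift e (actE.act r e')

theorem stmt5 (k L E R : Type*) [CommRing k] [CommRing L] [CommRing E] [CommRing R]
    [Algebra k L] [Algebra k E] [Algebra k R] (T : TwoCrossedModule k L E R) (e f g : E) :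
    T.lift g (T.d2 (T.lift f e)) = T.lift (f * g) e := by
  calc T.lift g (T.d2 (T.lift f e))
      = T.lift g (f * e) - T.lift g (T.actE.act (T.d1 e) f) := by rw [T.axm1, map_sub]
    _ = T.lift (g * f) e + T.actL.act (T.d1 e) (T.lift g f)
          - T.actL.act (T.d1 e) (T.lift g f) := by rw [T.axm3, T.axm6b]
    _ = T.lift (f * g) e := by rw [add_sub_cancel_right, mul_comm]
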